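/- arXiv:2404.07350 — 2 statements merged into one kernel-verified Lean document; each statement's English description precedes it below -/
import Mathlib

section
/- Let 𝒢 = (𝒞, ℰ) be a finite simple graph, and suppose the string assignment satisfies 𝒮_c ∩ 𝒮_{c'} = ∅ if and only if (c,c') ∈ ℰ. Let χ : [k] → 𝒞 be a 𝒢-reduced word (k ≥ 1) and ℓ : [k] → ℕ with ℓ(i) ≥ 1. Let T be the edge-colored directed multigraph consisting of two directed cycles glued at a single common vertex: the first cycle is the concatenation of directed paths P_1, …, P_k, where P_i has ℓ(i) edges all colored χ(i), and the second cycle is the concatenation of directed paths P'_1, …, P'_k, where P'_i has ℓ(i) edges all colored χ(i); for i ∈ [k] let u_i denote the initial vertex of P_i on the first cycle and u'_i the initial vertex of P'_i on the second cycle, with u_1 = u'_1 the glued common vertex. Given a family π = (π_s)_{s∈𝒮} of partitions of V(T), let J_π ⊆ [k] ∪ (−[k]) consist of those i ∈ [k] such that u_i and u_{i+1} (indices cyclic, u_{k+1} := u_1) lie in the same block of ⋀_{s∈𝒮} π_s, together with those −i (i ∈ [k]) such that u'_i and u'_{i+1} (cyclically) lie in the same block of ⋀_{s∈𝒮} π_s.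 Then the following three conditions cannot all hold: (1) π_s ≥ ρ_s for all s ∈ 𝒮; (2) GCC(T,π,s) is a tree for all s ∈ 𝒮; (3) J_π = ∅. -/
open Filter MeasureTheory Matrix
open scoped BigOperators Classical

namespace GraphPaper

/-! ### Directed multigraphs (test digraphs) -/

/-- A directed multigraph with vertex type `V` and edge type `E`. -/
structure Digr (V E : Type*) where
  src : E → V
  tgt : E → V

namespace Digr

variable {V E : Type*} (D : Digr V E)

/-- One-step (direction-agnostic) adjacency. -/
def Adj (v w : V) : Prop := ∃ e : E, D.src e = v ∧ D.tgt e = w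

/-- The setoid of weakly connected components. -/
def compSetoid : Setoid V := Relation.EqvGen.setoid D.Adj

/-- The weakly connected components. -/
def Components : Type _ := Quotient D.compSetoid

/-- The number of weakly connected components. -/
noncomputable def ncomp : ℕ := Nat.card D.Components

/-- Weak connectedness. -/
def IsConnected : Prop := Nonempty V ∧ ∀ v w : V, D.compSetoid v w

/-- The digraph with one edge removed. -/
def erase (e₀ : E) : Digr V {e : E // e ≠ e₀} :=
  ⟨fun e => D.src e.1, fun e => D.tgt e.1⟩

/-- `e₀` is a cut edge: removing it increases the number of weakly connected components. -/
def IsCutEdge (e₀ : E) : Prop := D.ncomp < (D.erase e₀).ncomp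

/-- Two-edge-connectedness: weakly connected with no cut edge. -/
def IsTwoEdgeConnected : Prop := D.IsConnected ∧ ∀ e : E, ¬ D.IsCutEdge e

/-- A tree (as an undirected multigraph): connected, with no cycles and no parallel
edges; equivalently, connected and every edge is a cut edge. -/
def IsTree : Prop := D.IsConnected ∧ ∀ e : E, D.IsCutEdge e

/-- Two vertices are related iff they are joined by a path containing no cut edges;
the classes are the two-edge-connected components. -/
def tecSetoid : Setoid V :=
  Relation.EqvGen.setoid (fun v w => ∃ e : E, ¬ D.IsCutEdge e ∧ D.src e = v ∧ D.tgt e = w)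

/-- The degree of a two-edge-connected component in the forest `ℱ(D)`:
the number of cut edges incident to it. -/
noncomputable def tecDeg (b : Quotient D.tecSetoid) : ℕ :=
  Nat.card {e : E // D.IsCutEdge e ∧
    (Quotient.mk D.tecSetoid (D.src e) = b ∨ Quotient.mk D.tecSetoid (D.tgt e) = b)}

/-- `𝔣(D)`: the total number of leaves of the forest `ℱ(D)` of two-edge-connected
components, an isolated vertex counting as two leaves. -/
noncomputable def leafCount : ℕ :=
  ∑ᶠ b : Quotient D.tecSetoid,
    (if D.tecDeg b = 0 then 2 else if D.tecDeg b = 1 then 1 else 0)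

/-- The quotient digraph by a partition (setoid) of the vertices. -/
def quotient (s : Setoid V) : Digr (Quotient s) E :=
  ⟨fun e => Quotient.mk s (D.src e), fun e => Quotient.mk s (D.tgt e)⟩

/-- The subgraph retaining only the edges satisfying `p` (all vertices kept). -/
def restrict (p : E → Prop) : Digr V {e : E // p e} :=
  ⟨fun e => D.src e.1, fun e => D.tgt e.1⟩

/-- The trace of a test digraph with labels `A`. -/
noncomputable def tdTrace {ι : Type*} (A : E → Matrix ι ι ℂ) : ℂ :=
  (1 / (Nat.card ι : ℂ) ^ D.ncomp) *
    ∑ᶠ i : V → ι, ∏ᶠ e : E, A e (i (D.tgt e)) (i (D.src e))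

/-- The injective trace of a test digraph with labels `A`. -/
noncomputable def tdTraceInj {ι : Type*} (A : E → Matrix ι ι ℂ) : ℂ :=
  (1 / (Nat.card ι : ℂ) ^ D.ncomp) *
    ∑ᶠ i : V → ι,
      if Function.Injective i then ∏ᶠ e : E, A e (i (D.tgt e)) (i (D.src e)) else 0

end Digr

/-! ### Colored digraphs, partitions, and the associated auxiliary graphs -/

section Colored

variable {V E S C : Type*}

/-- `ρ_s` : the partition of `V` into weakly connected components of the subgraph of `D`
retaining only edges whose color is not related to the string `s`. -/
def rhoSetoid (D : Digr V E) (χ : E → C) (rel : S → C → Prop) (s : S) : Setoid V :=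
  Relation.EqvGen.setoid (fun v w => ∃ e : E, ¬ rel s (χ e) ∧ D.src e = v ∧ D.tgt e = w)

/-- `ω_{π,c} = ⋀_{s ∈ 𝒮_c} π_s`, the common refinement. -/
def omegaSetoid (rel : S → C → Prop) (π : S → Setoid V) (c : C) : Setoid V :=
  ⨅ s : {s : S // rel s c}, π s.1

/-- `T_{π,c} = (T|_c)/ω_{π,c}`. -/
def Tpc (D : Digr V E) (χ : E → C) (rel : S → C → Prop) (π : S → Setoid V) (c : C) :
    Digr (Quotient (omegaSetoid rel π c)) {e : E // χ e = c} :=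
  (D.restrict (fun e => χ e = c)).quotient (omegaSetoid rel π c)

/-- `𝒢_{π,s} = (T|_{𝒞_s})/π_s`. -/
def Gps (D : Digr V E) (χ : E → C) (rel : S → C → Prop) (π : S → Setoid V) (s : S) :
    Digr (Quotient (π s)) {e : E // rel s (χ e)} :=
  (D.restrict (fun e => rel s (χ e))).quotient (π s)

/-- The map `h_{s,c} : V(T_{π,c}) → V(𝒢_{π,s})`, `[v]_{ω_{π,c}} ↦ [v]_{π_s}`. -/
def hmap (rel : S → C → Prop) (π : S → Setoid V) {s : S} {c : C} (h : rel s c) :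
    Quotient (omegaSetoid rel π c) → Quotient (π s) :=
  fun q => Quotient.liftOn q (fun v => Quotient.mk (π s) v)
    (fun a b hab => Quot.sound
      (Setoid.le_def.mp (iInf_le (fun s' : {s' : S // rel s' c} => π s'.1) ⟨s, h⟩) hab))

/-- The vertex set of the graph of colored components `GCC(T,π,s)`. -/
def GCCVert (D : Digr V E) (χ : E → C) (rel : S → C → Prop) (π : S → Setoid V) (s : S) :
    Type _ :=
  Quotient (π s) ⊕ (Σ c : {c : C // rel s c}, (Tpc D χ rel π c.1).Components)

/-- The edge set of `GCC(T,π,s)`. -/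
def GCCEdge (rel : S → C → Prop) (π : S → Setoid V) (s : S) : Type _ :=
  Σ c : {c : C // rel s c}, Quotient (omegaSetoid rel π c.1)

/-- The graph of colored components `GCC(T,π,s)`: the bipartite multigraph with an edge
for each `v ∈ V(T_{π,c})` (`c ∈ 𝒞_s`), joining the component of `T_{π,c}` containing `v`
to `h_{s,c}(v)`. -/
def GCC (D : Digr V E) (χ : E → C) (rel : S → C → Prop) (π : S → Setoid V) (s : S) :
    Digr (GCCVert D χ rel π s) (GCCEdge rel π s) where
  src := fun p => Sum.inr ⟨p.1, Quotient.mk (Tpc D χ rel π p.1.1).compSetoid p.2⟩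
  tgt := fun p => Sum.inl (hmap rel π p.1.2 p.2)

end Colored

/-! ### The matrix model -/

section Model

variable {S C : Type*}

/-- Index set for `⊗_{s ∈ 𝒮} M_N(ℂ)`. -/
abbrev BigIx (S : Type*) (N : ℕ) := S → Fin N

/-- Index set for `⊗_{s ∈ 𝒮_c} M_N(ℂ)`. -/
abbrev ColIx (rel : S → C → Prop) (c : C) (N : ℕ) := {s : S // rel s c} → Fin N

/-- View a matrix in `⊗_{s ∈ 𝒮_c} M_N(ℂ)` inside `⊗_{s ∈ 𝒮} M_N(ℂ)` by tensoring with
the identity on the remaining factors. -/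
noncomputable def embed [Fintype S] (rel : S → C → Prop) (c : C) {N : ℕ}
    (X : Matrix (ColIx rel c N) (ColIx rel c N) ℂ) :
    Matrix (BigIx S N) (BigIx S N) ℂ :=
  Matrix.of fun a b =>
    if (∀ s : S, ¬ rel s c → a s = b s) then X (fun s => a s.1) (fun s => b s.1) else 0

/-- The permutation matrix of a permutation. -/
def permMat {ι : Type*} [DecidableEq ι] (σ : Equiv.Perm ι) : Matrix ι ι ℂ :=
  Matrix.of fun i j => if σ j = i then 1 else 0

/-- `X̲ = Σ_c^* X Σ_c`, viewed inside `⊗_{s ∈ 𝒮} M_N(ℂ)`. -/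
noncomputable def conjEmbed [Fintype S] (rel : S → C → Prop) (c : C) {N : ℕ}
    (σc : Equiv.Perm (ColIx rel c N))
    (X : Matrix (ColIx rel c N) (ColIx rel c N) ℂ) :
    Matrix (BigIx S N) (BigIx S N) ℂ :=
  embed rel c ((permMat σc)ᴴ * X * permMat σc)

/-- `Δ`, the conditional expectation onto the diagonal. -/
def diagPart {ι : Type*} [DecidableEq ι] (M : Matrix ι ι ℂ) : Matrix ι ι ℂ :=
  Matrix.diagonal fun i => M i i

/-- The normalized `L²`-norm `‖M‖₂ = tr_n(M^*M)^{1/2}`. -/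
noncomputable def l2norm {ι : Type*} [Fintype ι] (M : Matrix ι ι ℂ) : ℝ :=
  Real.sqrt ((Matrix.trace (Mᴴ * M) / (Fintype.card ι : ℂ)).re)

/-- The operator norm of a matrix acting on Euclidean space. -/
noncomputable def opNorm {ι : Type*} [Fintype ι] [DecidableEq ι] (M : Matrix ι ι ℂ) : ℝ :=
  ‖Matrix.toEuclideanCLM (𝕜 := ℂ) M‖

/-- The ordered product `f 0 * f 1 * ⋯ * f (k-1)`. -/
def prodList {M : Type*} [Monoid M] (k : ℕ) (f : Fin k → M) : M :=
  ((List.finRange k).map f).prod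

/-- `γ_N(T,π)`. -/
noncomputable def gammaN {V E : Type*} [Fintype S] (rel : S → C → Prop)
    (D : Digr V E) (χ : E → C) (N : ℕ)
    (X : (e : E) → Matrix (ColIx rel (χ e) N) (ColIx rel (χ e) N) ℂ)
    (Λ : V → Matrix (BigIx S N) (BigIx S N) ℂ)
    (π : S → Setoid V)
    (σ : (c : C) → Equiv.Perm (ColIx rel c N)) : ℂ :=
  (1 / (N : ℂ) ^ (Nat.card S)) *
    ∑ᶠ i : V → BigIx S N,
      if (∀ s : S, Setoid.ker (fun v => i v s) = π s) then
        (∏ᶠ v : V, Λ v (i v) (i v)) *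
          ∏ᶠ e : E, (conjEmbed rel (χ e) (σ (χ e)) (X e)) (i (D.tgt e)) (i (D.src e))
      else 0

/-- `λ_N(T,π)`. -/
noncomputable def lambdaN {V : Type*} [Fintype S] (N : ℕ)
    (Λ : V → Matrix (BigIx S N) (BigIx S N) ℂ) (π : S → Setoid V) : ℂ :=
  (1 / (N : ℂ) ^ (∑ᶠ s : S, Nat.card (Quotient (π s)))) *
    ∑ᶠ i : V → BigIx S N,
      if (∀ s : S, Setoid.ker (fun v => i v s) = π s) then (∏ᶠ v : V, Λ v (i v) (i v))
      else 0

/-- `τ_{N^{#𝒮}}(T̊)`, the trace of the test digraph `T` with a `Λ_v`-labelled self-loop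
added at each vertex `v`. -/
noncomputable def ringTrace {V E : Type*} [Fintype S] (rel : S → C → Prop)
    (D : Digr V E) (χ : E → C) (N : ℕ)
    (X : (e : E) → Matrix (ColIx rel (χ e) N) (ColIx rel (χ e) N) ℂ)
    (Λ : V → Matrix (BigIx S N) (BigIx S N) ℂ)
    (σ : (c : C) → Equiv.Perm (ColIx rel c N)) : ℂ :=
  (1 / (N : ℂ) ^ (Nat.card S)) *
    ∑ᶠ i : V → BigIx S N,
      (∏ᶠ v : V, Λ v (i v) (i v)) *
        ∏ᶠ e : E, (conjEmbed rel (χ e) (σ (χ e)) (X e)) (i (D.tgt e)) (i (D.src e))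

/-- Expectation with respect to independent uniformly random permutations, one for each
color: the average over all tuples of permutations. -/
noncomputable def Eperm [Fintype S] (rel : S → C → Prop) (N : ℕ)
    (f : ((c : C) → Equiv.Perm (ColIx rel c N)) → ℂ) : ℂ :=
  (∑ᶠ σ : (c : C) → Equiv.Perm (ColIx rel c N), f σ) /
    (Nat.card ((c : C) → Equiv.Perm (ColIx rel c N)) : ℂ)

/-- Transport a matrix label along an equality of colors. -/
def castCol (rel : S → C → Prop) {N : ℕ} {c c' : C} (h : c = c')
    (X : Matrix (ColIx rel c N) (ColIx rel c N) ℂ) :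
    Matrix (ColIx rel c' N) (ColIx rel c' N) ℂ := h ▸ X

/-- The uniform probability measure on the tuples of permutations (with the discrete
`σ`-algebra). -/
noncomputable def uniformTupleMeasure [Fintype C] [Fintype S] (rel : S → C → Prop) (N : ℕ) :=
  letI : MeasurableSpace ((c : C) → Equiv.Perm (ColIx rel c N)) := ⊤
  haveI : Nonempty ((c : C) → Equiv.Perm (ColIx rel c N)) := ⟨fun _ => 1⟩
  ((PMF.uniformOfFintype ((c : C) → Equiv.Perm (ColIx rel c N))).toMeasure :
    Measure ((c : C) → Equiv.Perm (ColIx rel c N)))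

/-- The tuple `(Σ_c)_{c ∈ 𝒞}` of random permutations is uniformly distributed on the
product (equivalently, the `Σ_c` are independent and each uniform). -/
def hasUniformLaw [Fintype C] [Fintype S] (rel : S → C → Prop) {Ω : Type*}
    [MeasurableSpace Ω] (P : Measure Ω) (N : ℕ)
    (Sp : (c : C) → Ω → Equiv.Perm (ColIx rel c N)) : Prop :=
  letI : MeasurableSpace ((c : C) → Equiv.Perm (ColIx rel c N)) := ⊤
  Measure.map (fun ω c => Sp c ω) P = uniformTupleMeasure rel N

end Model

/-- A word `χ : [k] → 𝒞` is `𝒢`-reduced. -/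
def GReduced {C : Type*} (Edg : C → C → Prop) {k : ℕ} (χ : Fin k → C) : Prop :=
  ∀ i j : Fin k, i < j → χ i = χ j → ∃ l : Fin k, i < l ∧ l < j ∧ ¬ Edg (χ i) (χ l)

/-! ### Sofic groups and graph products of groups -/

/-- The normalized Hamming distance on `S_N`. -/
noncomputable def dHamm {n : ℕ} (σ τ : Equiv.Perm (Fin n)) : ℝ :=
  ((Finset.univ.filter fun j : Fin n => σ j ≠ τ j).card : ℝ) / n

/-- A group is sofic if it admits an asymptotic homomorphism into permutation groups. -/
def IsSofic (Γ : Type*) [Group Γ] : Prop :=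
  ∃ (Nk : ℕ → ℕ) (σ : (k : ℕ) → Γ → Equiv.Perm (Fin (Nk k))),
    Tendsto Nk atTop atTop ∧
    (∀ g h : Γ, Tendsto (fun k => dHamm (σ k g * σ k h) (σ k (g * h))) atTop (nhds 0)) ∧
    (∀ g : Γ, Tendsto (fun k => dHamm (σ k g) 1) atTop
      (nhds (if g = 1 then 0 else 1)))

/-- The normal subgroup of the free product generated by the commutators of elements of
vertex groups joined by an edge. -/
def graphProductKer {C : Type*} (Edg : C → C → Prop) (G : C → Type*)
    [∀ c, Group (G c)] : Subgroup (Monoid.CoprodI G) :=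
  Subgroup.normalClosure
    {x | ∃ (c c' : C) (_ : Edg c c') (g : G c) (g' : G c'),
      x = Monoid.CoprodI.of g * Monoid.CoprodI.of g' *
        (Monoid.CoprodI.of g)⁻¹ * (Monoid.CoprodI.of g')⁻¹}

/-- The graph product of the groups `(G c)_{c ∈ 𝒞}` over the graph with edge relation
`Edg`. -/
def GraphProduct {C : Type*} (Edg : C → C → Prop) (G : C → Type*) [∀ c, Group (G c)] :
    Type _ :=
  Monoid.CoprodI G ⧸ graphProductKer Edg G

instance graphProductKer_normal {C : Type*} (Edg : C → C → Prop) (G : C → Type*)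
    [∀ c, Group (G c)] : (graphProductKer Edg G).Normal :=
  Subgroup.normalClosure_normal

instance {C : Type*} (Edg : C → C → Prop) (G : C → Type*) [∀ c, Group (G c)] :
    Group (GraphProduct Edg G) :=
  QuotientGroup.Quotient.group _

/-- The group element corresponding to a word in the generators and their inverses:
the letter `(j, tt)` is `g_j`, and `(j, ff)` is `g_j⁻¹`. -/
def wordElemG {Γ : Type*} [Group Γ] (g : ℕ → Γ) {m : ℕ} (w : Fin m → ℕ × Bool) : Γ :=
  prodList m (fun i => if (w i).2 then g (w i).1 else (g (w i).1)⁻¹)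

/-- The matrix product corresponding to a word in permutation matrices and their
inverses. -/
noncomputable def wordMat {N m : ℕ} (T : ℕ → Equiv.Perm (Fin N)) (w : Fin m → ℕ × Bool) :
    Matrix (Fin N) (Fin N) ℂ :=
  prodList m (fun i => if (w i).2 then permMat (T (w i).1) else (permMat (T (w i).1))⁻¹)

/-- The cyclic successor of an edge-position in the concatenation of the paths
`P_1, …, P_k` (path `P_i` having `ℓ i` edges) closed up into a cycle. -/
def cycNext (k : ℕ) (ℓ : Fin k → ℕ) (hℓ : ∀ i, 0 < ℓ i) :
    (Σ i : Fin k, Fin (ℓ i)) → Σ i : Fin k, Fin (ℓ i) :=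
  fun p => if h : (p.2 : ℕ) + 1 < ℓ p.1 then ⟨p.1, ⟨(p.2 : ℕ) + 1, h⟩⟩
    else ⟨⟨((p.1 : ℕ) + 1) % k, Nat.mod_lt _ p.1.pos⟩, ⟨0, hℓ _⟩⟩

/-- The identification gluing the initial vertex of the first cycle with the initial
vertex of the second cycle. -/
def glueSetoid (k : ℕ) (ℓ : Fin k → ℕ) (hk : 0 < k) (hℓ : ∀ i, 0 < ℓ i) :
    Setoid ((Σ i : Fin k, Fin (ℓ i)) ⊕ (Σ i : Fin k, Fin (ℓ i))) :=
  Relation.EqvGen.setoid (fun v w =>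
    v = Sum.inl ⟨⟨0, hk⟩, ⟨0, hℓ _⟩⟩ ∧ w = Sum.inr ⟨⟨0, hk⟩, ⟨0, hℓ _⟩⟩)

/-- The edge-colored directed multigraph consisting of two directed cycles (each the
concatenation of directed paths `P_1, …, P_k`, with `P_i` having `ℓ i` edges) glued at a
single common vertex.  Each edge is identified with its starting position; the edge at
position `p` goes from `p` to `cycNext p`. -/
def twoCycleDigr (k : ℕ) (ℓ : Fin k → ℕ) (hk : 0 < k) (hℓ : ∀ i, 0 < ℓ i) :
    Digr (Quotient (glueSetoid k ℓ hk hℓ))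
      ((Σ i : Fin k, Fin (ℓ i)) ⊕ (Σ i : Fin k, Fin (ℓ i))) where
  src := fun ed => Quotient.mk (glueSetoid k ℓ hk hℓ) ed
  tgt := fun ed =>
    Quotient.mk (glueSetoid k ℓ hk hℓ) (Sum.map (cycNext k ℓ hℓ) (cycNext k ℓ hℓ) ed)

/-- The coloring of the edges: every edge of `P_i` or `P'_i` is colored `χ i`. -/
def twoCycleColor {C : Type*} (k : ℕ) (ℓ : Fin k → ℕ) (χ : Fin k → C) :
    ((Σ i : Fin k, Fin (ℓ i)) ⊕ (Σ i : Fin k, Fin (ℓ i))) → C :=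
  Sum.elim (fun p => χ p.1) (fun p => χ p.1)

/-- `u_i`, the initial vertex of `P_i` on the first cycle. -/
def uVert (k : ℕ) (ℓ : Fin k → ℕ) (hk : 0 < k) (hℓ : ∀ i, 0 < ℓ i) (i : Fin k) :
    Quotient (glueSetoid k ℓ hk hℓ) :=
  Quotient.mk _ (Sum.inl ⟨i, ⟨0, hℓ i⟩⟩)

/-- `u'_i`, the initial vertex of `P'_i` on the second cycle. -/
def uVert' (k : ℕ) (ℓ : Fin k → ℕ) (hk : 0 < k) (hℓ : ∀ i, 0 < ℓ i) (i : Fin k) :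
    Quotient (glueSetoid k ℓ hk hℓ) :=
  Quotient.mk _ (Sum.inr ⟨i, ⟨0, hℓ i⟩⟩)

/-! Only the first cycle is needed. Walk once around it in `GCC(T,π,s₀)`, for a string `s₀`
seeing the first color of the word: a letter `i` seen by `s₀` contributes the two edges joining `[u_i]` and
`[u_{i+1}]` to the component of `T_{π,χ i}` containing `P_i`, and an unseen letter contributes
nothing, since `ρ_{s₀} ≤ π_{s₀}` contracts `P_i`. As `GCC(T,π,s₀)` is a tree, this closed walk
backtracks. A backtrack inside letter `i` makes `u_i` and `u_{i+1}` equivalent under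
`ω_{π,χ i}`, hence under `⋀ π` (the remaining strings contract `P_i`), so `i ∈ J_π`. A backtrack
between letters `i < j` forces `χ i = χ j` and `u_{i+1} ∼ u_j` under `ω_{π,χ i}`; reducedness
gives a letter strictly between them sharing a string `s'` with `χ i`, and the argument repeats
for `s'` on the shorter closed stretch from `u_{i+1}` to `u_j`. -/

namespace Digr

variable {V E : Type*} (D : Digr V E)

def stepSrc (p : E × Bool) : V := if p.2 then D.src p.1 else D.tgt p.1

def stepTgt (p : E × Bool) : V := if p.2 then D.tgt p.1 else D.src p.1

/-- Undirected walks: the step `(e, true)` traverses `e` forwards, `(e, false)` backwards. -/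
def IsWalk : V → List (E × Bool) → V → Prop
  | v, [], w => v = w
  | v, p :: l, w => v = D.stepSrc p ∧ IsWalk (D.stepTgt p) l w

@[simp]
lemma isWalk_nil {v w : V} : D.IsWalk v [] w ↔ v = w := Iff.rfl

@[simp]
lemma isWalk_cons {p : E × Bool} {l : List (E × Bool)} {v w : V} :
    D.IsWalk v (p :: l) w ↔ v = D.stepSrc p ∧ D.IsWalk (D.stepTgt p) l w := Iff.rfl

lemma isWalk_append {l₁ l₂ : List (E × Bool)} {v w : V} :
    D.IsWalk v (l₁ ++ l₂) w ↔ ∃ u, D.IsWalk v l₁ u ∧ D.IsWalk u l₂ w := by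
  induction l₁ generalizing v with
  | nil => simp
  | cons p l ih => simp [ih, and_assoc]

lemma eqvGen_erase_stepSrc_stepTgt {e₀ : E} {q : E × Bool} (hq : q.1 ≠ e₀) :
    Relation.EqvGen (D.erase e₀).Adj (D.stepSrc q) (D.stepTgt q) := by
  obtain ⟨e, _ | _⟩ := q
  · exact Relation.EqvGen.symm _ _ (Relation.EqvGen.rel _ _ ⟨⟨e, hq⟩, rfl, rfl⟩)
  · exact Relation.EqvGen.rel _ _ ⟨⟨e, hq⟩, rfl, rfl⟩

lemma IsWalk.eqvGen_erase {e₀ : E} {l : List (E × Bool)} {v w : V} (hw : D.IsWalk v l w)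
    (hl : ∀ q ∈ l, q.1 ≠ e₀) : Relation.EqvGen (D.erase e₀).Adj v w := by
  induction l generalizing v with
  | nil => exact hw ▸ Relation.EqvGen.refl v
  | cons q l ih =>
    obtain ⟨rfl, hw⟩ := hw
    exact Relation.EqvGen.trans _ _ _
      (D.eqvGen_erase_stepSrc_stepTgt (hl q List.mem_cons_self))
      (ih hw fun q' hq' => hl q' (List.mem_cons_of_mem _ hq'))

lemma IsCutEdge.not_eqvGen_erase {e : E} (he : D.IsCutEdge e) :
    ¬ Relation.EqvGen (D.erase e).Adj (D.src e) (D.tgt e) := by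
  intro hconn
  have hcomp : D.compSetoid = (D.erase e).compSetoid := by
    refine le_antisymm (Setoid.eqvGen_le ?_) (Setoid.eqvGen_mono ?_)
    · rintro _ _ ⟨e', rfl, rfl⟩
      by_cases h : e' = e
      · exact h ▸ hconn
      · exact Relation.EqvGen.rel _ _ ⟨⟨e', h⟩, rfl, rfl⟩
    · rintro _ _ ⟨e', rfl, rfl⟩
      exact ⟨e'.1, rfl, rfl⟩
  unfold IsCutEdge ncomp Components at he
  rw [hcomp] at he
  exact lt_irrefl _ he

lemma IsCutEdge.exists_mem_of_isWalk {p : E × Bool} (hp : D.IsCutEdge p.1)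
    {l : List (E × Bool)} (hw : D.IsWalk (D.stepTgt p) l (D.stepSrc p)) : ∃ q ∈ l, q.1 = p.1 := by
  by_contra! hl
  have hconn := IsWalk.eqvGen_erase D hw hl
  obtain ⟨e, _ | _⟩ := p
  · exact hp.not_eqvGen_erase D hconn
  · exact hp.not_eqvGen_erase D (Relation.EqvGen.symm _ _ hconn)

theorem IsWalk.exists_backtrack (hcut : ∀ e, D.IsCutEdge e) {v : V} {l : List (E × Bool)}
    (hw : D.IsWalk v l v) (hl : l ≠ []) :
    ∃ l₁ e d l₂, l = l₁ ++ (e, d) :: (e, !d) :: l₂ := by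
  induction hn : l.length using Nat.strong_induction_on generalizing v l with
  | _ n ih =>
  obtain ⟨p, rest, rfl⟩ := List.exists_cons_of_ne_nil hl
  obtain ⟨rfl, hrest⟩ := hw
  obtain ⟨q₀, hq₀, hq₀p⟩ := (hcut p.1).exists_mem_of_isWalk D hrest
  -- `q` is the first reuse of the edge of `p`; it traverses it backwards, as otherwise the part
  -- `l₁` before it would join the endpoints of that cut edge without using it
  obtain ⟨q, hfind⟩ : ∃ q, rest.find? (fun q => q.1 = p.1) = some q :=
    Option.isSome_iff_exists.mp (List.find?_isSome.mpr ⟨q₀, hq₀, by simpa using hq₀p⟩)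
  obtain ⟨hqp, l₁, l₂, rfl, hl₁⟩ := List.find?_eq_some_iff_append.mp hfind
  simp only [decide_eq_true_eq, Bool.not_eq_true', decide_eq_false_iff_not] at hqp hl₁
  obtain ⟨u, hw₁, rfl, -⟩ := (D.isWalk_append).mp hrest
  obtain ⟨e₀, d⟩ := p
  obtain ⟨e, d'⟩ := q
  obtain rfl : e = e₀ := hqp
  rcases Bool.eq_or_eq_not d' d with rfl | rfl
  · obtain ⟨q', hq', hq'e⟩ := (hcut e).exists_mem_of_isWalk D (p := (e, d')) hw₁
    exact absurd hq'e (hl₁ q' hq')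
  · have hclosed : D.IsWalk (D.stepTgt (e, d)) l₁ (D.stepTgt (e, d)) := by
      cases d <;> exact hw₁
    rcases eq_or_ne l₁ [] with rfl | hne
    · exact ⟨[], e, d, l₂, rfl⟩
    · obtain ⟨m₁, e₁, d₁, m₂, rfl⟩ := ih l₁.length (by simp [← hn]) hclosed hne rfl
      exact ⟨(e, d) :: m₁, e₁, d₁, m₂ ++ (e, !d) :: l₂, by simp⟩

end Digr

section FlatMap

variable {α β : Type*}

lemma exists_mem_of_flatMap_eq_cons {f : α → List β} {L : List α} {y : β} {l : List β}
    (h : L.flatMap f = y :: l) : ∃ t ∈ L, ∃ bs, f t = y :: bs := by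
  induction L with
  | nil => simp at h
  | cons t L ih =>
    rw [List.flatMap_cons] at h
    cases hft : f t with
    | nil =>
      rw [hft, List.nil_append] at h
      obtain ⟨t', ht', hft'⟩ := ih h
      exact ⟨t', List.mem_cons_of_mem _ ht', hft'⟩
    | cons b bs =>
      rw [hft, List.cons_append, List.cons.injEq] at h
      exact ⟨t, List.mem_cons_self, bs, h.1 ▸ hft⟩

lemma exists_of_flatMap_eq_append_cons_cons {f : α → List β}
    (hf : ∀ t, f t = [] ∨ ∃ u v, f t = [u, v]) {L : List α} {l₁ l₂ : List β} {x y : β}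
    (h : L.flatMap f = l₁ ++ x :: y :: l₂) :
    (∃ t ∈ L, f t = [x, y]) ∨
      ∃ t t', [t, t'].Sublist L ∧ (∃ u, f t = [u, x]) ∧ ∃ v, f t' = [y, v] := by
  induction L generalizing l₁ with
  | nil => simp at h
  | cons t L ih =>
    rw [List.flatMap_cons] at h
    have lift : ((∃ t ∈ L, f t = [x, y]) ∨
        ∃ t t', [t, t'].Sublist L ∧ (∃ u, f t = [u, x]) ∧ ∃ v, f t' = [y, v]) →
        ((∃ t' ∈ t :: L, f t' = [x, y]) ∨
        ∃ t₁ t₂, [t₁, t₂].Sublist (t :: L) ∧ (∃ u, f t₁ = [u, x]) ∧ ∃ v, f t₂ = [y, v]) := by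
      rintro (⟨t', ht', h'⟩ | ⟨t₁, t₂, hs, h'⟩)
      · exact Or.inl ⟨t', List.mem_cons_of_mem _ ht', h'⟩
      · exact Or.inr ⟨t₁, t₂, hs.cons t, h'⟩
    rcases hf t with hft | ⟨u, v, hft⟩
    · rw [hft, List.nil_append] at h
      exact lift (ih h)
    · rw [hft] at h
      rcases l₁ with _ | ⟨w, _ | ⟨w', l₁⟩⟩
      · simp only [List.cons_append, List.nil_append, List.cons.injEq] at h
        obtain ⟨rfl, rfl, -⟩ := h
        exact Or.inl ⟨t, List.mem_cons_self, hft⟩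
      · simp only [List.cons_append, List.nil_append, List.cons.injEq] at h
        obtain ⟨-, rfl, hrest⟩ := h
        obtain ⟨t', ht', bs, hft'⟩ := exists_mem_of_flatMap_eq_cons hrest
        refine Or.inr ⟨t, t', List.cons_sublist_cons.mpr (List.singleton_sublist.mpr ht'),
          ⟨u, hft⟩, ?_⟩
        rcases hf t' with h0 | ⟨u', v', h2⟩
        · simp [h0] at hft'
        · rw [h2, List.cons.injEq] at hft'
          exact ⟨v', hft'.1 ▸ h2⟩
      · simp only [List.cons_append, List.cons.injEq] at h
        exact lift (ih h.2.2)

end FlatMap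

section ClosedWords

variable {V E S C : Type*} (D : Digr V E) (col : E → C) (rel : S → C → Prop)
  (π : S → Setoid V)

def Digr.ColorAdj (c : C) (v w : V) : Prop := ∃ e, col e = c ∧ D.src e = v ∧ D.tgt e = w

lemma omegaSetoid_le {s : S} {c : C} (h : rel s c) : omegaSetoid rel π c ≤ π s :=
  iInf_le (fun s' : {s' : S // rel s' c} => π s'.1) ⟨s, h⟩

lemma compSetoid_Tpc_of_eqvGen {c : C} {v w : V}
    (h : Relation.EqvGen (D.ColorAdj col c) v w) :
    (Tpc D col rel π c).compSetoid (Quotient.mk _ v) (Quotient.mk _ w) :=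
  Setoid.eqvGen_le (s := (Tpc D col rel π c).compSetoid.comap (Quotient.mk _))
    (fun _ _ ⟨e, he, hv, hw⟩ => Relation.EqvGen.rel _ _ ⟨⟨e, he⟩, hv ▸ rfl, hw ▸ rfl⟩) h

lemma rhoSetoid_of_eqvGen {s : S} {c : C} (hs : ¬ rel s c) {v w : V}
    (h : Relation.EqvGen (D.ColorAdj col c) v w) : rhoSetoid D col rel s v w :=
  h.mono fun _ _ ⟨e, he, hv, hw⟩ => ⟨e, he ▸ hs, hv, hw⟩

def gccEdge {s : S} {c : C} (h : rel s c) (v : V) : GCCEdge rel π s :=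
  ⟨⟨c, h⟩, Quotient.mk _ v⟩

lemma omegaSetoid_of_gccEdge_eq {s : S} {c c' : C} {h : rel s c} {h' : rel s c'} {v w : V}
    (he : gccEdge rel π h v = gccEdge rel π h' w) : c = c' ∧ omegaSetoid rel π c v w := by
  obtain ⟨h₁, h₂⟩ := Sigma.mk.inj_iff.mp he
  obtain rfl : c = c' := congrArg Subtype.val h₁
  exact ⟨rfl, Quotient.exact (eq_of_heq h₂)⟩

/-- Letter `t` of a word `ci` running through the vertices `U`, as steps in `GCC(T,π,s)`: if `s`
sees its color, from `[U t]` into the component of `T_{π,ci t}` through `U t` and out to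
`[U (t + 1)]`; otherwise no step. -/
noncomputable def letterSteps (ci : ℕ → C) (U : ℕ → V) (s : S) (t : ℕ) :
    List (GCCEdge rel π s × Bool) :=
  if h : rel s (ci t) then
    [(gccEdge rel π h (U t), false), (gccEdge rel π h (U (t + 1)), true)]
  else []

variable {rel π} {ci : ℕ → C} {U : ℕ → V} {s : S}

lemma letterSteps_eq_nil_or (t : ℕ) :
    letterSteps rel π ci U s t = [] ∨ ∃ x y, letterSteps rel π ci U s t = [x, y] := by
  unfold letterSteps
  split_ifs
  exacts [Or.inr ⟨_, _, rfl⟩, Or.inl rfl]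

lemma exists_of_letterSteps_eq {t : ℕ} {x y : GCCEdge rel π s × Bool}
    (h : letterSteps rel π ci U s t = [x, y]) :
    ∃ hs : rel s (ci t), x = (gccEdge rel π hs (U t), false) ∧
      y = (gccEdge rel π hs (U (t + 1)), true) := by
  unfold letterSteps at h
  split_ifs at h with hs
  · simp only [List.cons.injEq, and_true] at h
    exact ⟨hs, h.1.symm, h.2.symm⟩

variable (rel π)

lemma isWalk_flatMap_letterSteps (hρ : rhoSetoid D col rel s ≤ π s)
    (hpath : ∀ t, Relation.EqvGen (D.ColorAdj col (ci t)) (U t) (U (t + 1))) (a m : ℕ) :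
    (GCC D col rel π s).IsWalk (Sum.inl (Quotient.mk _ (U a)))
      ((List.range' a m).flatMap (letterSteps rel π ci U s))
      (Sum.inl (Quotient.mk _ (U (a + m)))) := by
  induction m generalizing a with
  | zero => rfl
  | succ m ih =>
    have hw := ih (a + 1)
    rw [show a + 1 + m = a + (m + 1) by omega] at hw
    rw [List.range'_succ, List.flatMap_cons]
    unfold letterSteps
    split_ifs with hs
    · refine ⟨rfl, ?_, hw⟩
      exact congrArg (fun q => (Sum.inr ⟨⟨ci a, hs⟩, q⟩ : GCCVert D col rel π s))
        (Quotient.sound (compSetoid_Tpc_of_eqvGen D col rel π (hpath a)))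
    · rw [List.nil_append, Quotient.sound (hρ (rhoSetoid_of_eqvGen D col rel hs (hpath a)))]
      exact hw

lemma exists_collapse_of_isTree (htree : (GCC D col rel π s).IsTree)
    (hρ : rhoSetoid D col rel s ≤ π s)
    (hpath : ∀ t, Relation.EqvGen (D.ColorAdj col (ci t)) (U t) (U (t + 1))) {a m : ℕ}
    (hclosed : π s (U a) (U (a + m))) (hseen : ∃ t, a ≤ t ∧ t < a + m ∧ rel s (ci t)) :
    (∃ t, a ≤ t ∧ t < a + m ∧ omegaSetoid rel π (ci t) (U t) (U (t + 1))) ∨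
      ∃ t t', a ≤ t ∧ t < t' ∧ t' < a + m ∧ ci t = ci t' ∧
        omegaSetoid rel π (ci t) (U (t + 1)) (U t') := by
  have hw := isWalk_flatMap_letterSteps D col rel π hρ hpath a m
  rw [← Quotient.sound hclosed] at hw
  have hne : (List.range' a m).flatMap (letterSteps rel π ci U s) ≠ [] := by
    obtain ⟨t, hat, htm, hs⟩ := hseen
    intro hnil
    have := List.flatMap_eq_nil_iff.mp hnil t (List.mem_range'_1.mpr ⟨hat, htm⟩)
    simp [letterSteps, hs] at this
  obtain ⟨l₁, e, d, l₂, hsplit⟩ := Digr.IsWalk.exists_backtrack _ htree.2 hw hne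
  rcases exists_of_flatMap_eq_append_cons_cons letterSteps_eq_nil_or hsplit with
    ⟨t, ht, hft⟩ | ⟨t, t', hsub, ⟨_, hft⟩, ⟨_, hft'⟩⟩
  · obtain ⟨_, hx, hy⟩ := exists_of_letterSteps_eq hft
    obtain ⟨hat, htm⟩ := List.mem_range'_1.mp ht
    exact Or.inl ⟨t, hat, htm, (omegaSetoid_of_gccEdge_eq rel π
      ((congrArg Prod.fst hx).symm.trans (congrArg Prod.fst hy))).2⟩
  · obtain ⟨_, -, hx⟩ := exists_of_letterSteps_eq hft
    obtain ⟨_, hy, -⟩ := exists_of_letterSteps_eq hft'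
    obtain ⟨hc, hω⟩ := omegaSetoid_of_gccEdge_eq rel π
      ((congrArg Prod.fst hx).symm.trans (congrArg Prod.fst hy))
    have htt' : t < t' :=
      List.pairwise_pair.mp ((List.pairwise_lt_range' (s := a) (n := m)).sublist hsub)
    obtain ⟨hat, -⟩ := List.mem_range'_1.mp (hsub.subset List.mem_cons_self)
    obtain ⟨-, ht'm⟩ := List.mem_range'_1.mp
      (hsub.subset (List.mem_cons_of_mem _ List.mem_cons_self))
    exact Or.inr ⟨t, t', hat, htt', ht'm, hc, hω⟩

theorem exists_omegaSetoid_of_window {k : ℕ} (htree : ∀ s, (GCC D col rel π s).IsTree)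
    (hρ : ∀ s, rhoSetoid D col rel s ≤ π s)
    (hpath : ∀ t, Relation.EqvGen (D.ColorAdj col (ci t)) (U t) (U (t + 1)))
    (hred : ∀ t t', t < t' → t' < k → ci t = ci t' →
      ∃ l, t < l ∧ l < t' ∧ ∃ s, rel s (ci t) ∧ rel s (ci l))
    {a m : ℕ} (hk : a + m ≤ k) (hclosed : π s (U a) (U (a + m)))
    (hseen : ∃ t, a ≤ t ∧ t < a + m ∧ rel s (ci t)) :
    ∃ t < k, omegaSetoid rel π (ci t) (U t) (U (t + 1)) := by
  induction m using Nat.strong_induction_on generalizing a s with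
  | _ m ih =>
  rcases exists_collapse_of_isTree D col rel π (htree s) (hρ s) hpath hclosed hseen with
    ⟨t, -, ht, hω⟩ | ⟨t, t', hat, htt', ht', hc, hω⟩
  · exact ⟨t, by omega, hω⟩
  · -- reducedness gives a letter `l` strictly between `t` and `t'` and a string `s'` seeing both
    -- `ci t` and `ci l`; as `ω_{π,ci t} ≤ π_{s'}`, the window strictly between them is closed
    obtain ⟨l, htl, hlt', s', hs't, hs'l⟩ := hred t t' htt' (by omega) hc
    refine ih (t' - (t + 1)) (by omega) (a := t + 1) (by omega) ?_ ⟨l, by omega, by omega, hs'l⟩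
    rw [show t + 1 + (t' - (t + 1)) = t' by omega]
    exact omegaSetoid_le rel π hs't hω

theorem exists_iInf_of_closed_word (hne : ∀ c, ∃ s, rel s c) {k : ℕ} (hk : 0 < k)
    (hU : U k = U 0) (htree : ∀ s, (GCC D col rel π s).IsTree)
    (hρ : ∀ s, rhoSetoid D col rel s ≤ π s)
    (hpath : ∀ t, Relation.EqvGen (D.ColorAdj col (ci t)) (U t) (U (t + 1)))
    (hred : ∀ t t', t < t' → t' < k → ci t = ci t' →
      ∃ l, t < l ∧ l < t' ∧ ∃ s, rel s (ci t) ∧ rel s (ci l)) :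
    ∃ t < k, (⨅ s, π s) (U t) (U (t + 1)) := by
  obtain ⟨s₀, hs₀⟩ := hne (ci 0)
  obtain ⟨t, htk, hω⟩ := exists_omegaSetoid_of_window D col rel π (s := s₀) htree hρ hpath hred
    (a := 0) (m := k) (by omega) (by rw [zero_add, hU]) ⟨0, le_rfl, by omega, hs₀⟩
  refine ⟨t, htk, Setoid.sInf_iff.mpr ?_⟩
  rintro _ ⟨s, rfl⟩
  by_cases hs : rel s (ci t)
  · exact omegaSetoid_le rel π hs hω
  · exact hρ s (rhoSetoid_of_eqvGen D col rel hs (hpath t))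

end ClosedWords

lemma GReduced.exists_shared_string {S C : Type*} {rel : S → C → Prop} {Edg : C → C → Prop}
    (hstr : ∀ c c', (∀ s, ¬ (rel s c ∧ rel s c')) → Edg c c') {k : ℕ} {χ : Fin k → C}
    (hred : GReduced Edg χ) {i j : Fin k} (hij : i < j) (hc : χ i = χ j) :
    ∃ l, i < l ∧ l < j ∧ ∃ s, rel s (χ i) ∧ rel s (χ l) := by
  obtain ⟨l, hil, hlj, hE⟩ := hred i j hij hc
  refine ⟨l, hil, hlj, ?_⟩
  by_contra! h
  exact hE (hstr _ _ fun s hs => h s hs.1 hs.2)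

theorem exists_iInf_of_reduced_cycle {V E S C : Type*} (D : Digr V E) (col : E → C)
    (rel : S → C → Prop) (π : S → Setoid V) (hne : ∀ c, ∃ s, rel s c) {Edg : C → C → Prop}
    (hstr : ∀ c c', (∀ s, ¬ (rel s c ∧ rel s c')) → Edg c c') {k : ℕ} (hk : 0 < k)
    {χ : Fin k → C} (hred : GReduced Edg χ) (hρ : ∀ s, rhoSetoid D col rel s ≤ π s)
    (htree : ∀ s, (GCC D col rel π s).IsTree) (u : Fin k → V)
    (hpath : ∀ i : Fin k, Relation.EqvGen (D.ColorAdj col (χ i)) (u i)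
      (u ⟨(i + 1) % k, Nat.mod_lt _ hk⟩)) :
    ∃ i : Fin k, (⨅ s, π s) (u i) (u ⟨(i + 1) % k, Nat.mod_lt _ hk⟩) := by
  let pos : ℕ → Fin k := fun t => ⟨t % k, Nat.mod_lt _ hk⟩
  have pos_of_lt : ∀ t (ht : t < k), pos t = ⟨t, ht⟩ := fun t ht => Fin.ext (Nat.mod_eq_of_lt ht)
  have pos_succ : ∀ t, pos (t + 1) = ⟨((pos t : ℕ) + 1) % k, Nat.mod_lt _ hk⟩ :=
    fun t => Fin.ext (by simp [pos, Nat.add_mod])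
  obtain ⟨t, htk, h⟩ := exists_iInf_of_closed_word D col rel π (ci := χ ∘ pos) (U := u ∘ pos)
    hne hk (by simp [pos]) htree hρ (fun t => by simpa [pos_succ] using hpath (pos t))
    (fun t t' htt' ht'k hc => by
      have ht : t < k := htt'.trans ht'k
      obtain ⟨l, htl, hlt', hs⟩ := hred.exists_shared_string hstr (i := ⟨t, ht⟩) (j := ⟨t', ht'k⟩)
        htt' (by simpa [pos_of_lt _ ht, pos_of_lt _ ht'k] using hc)
      exact ⟨l, htl, hlt', by simpa [pos_of_lt _ ht, pos_of_lt _ l.2] using hs⟩)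
  refine ⟨⟨t, htk⟩, ?_⟩
  simpa [pos_of_lt t htk] using h

lemma eqvGen_colorAdj_uVert {C : Type*} (k : ℕ) (ℓ : Fin k → ℕ) (hk : 0 < k)
    (hℓ : ∀ i, 0 < ℓ i) (χ : Fin k → C) (i : Fin k) :
    Relation.EqvGen ((twoCycleDigr k ℓ hk hℓ).ColorAdj (twoCycleColor k ℓ χ) (χ i))
      (uVert k ℓ hk hℓ i) (uVert k ℓ hk hℓ ⟨(i + 1) % k, Nat.mod_lt _ hk⟩) := by
  have hedge : ∀ j (hj : j < ℓ i),
      Relation.EqvGen ((twoCycleDigr k ℓ hk hℓ).ColorAdj (twoCycleColor k ℓ χ) (χ i))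
        (Quotient.mk _ (Sum.inl ⟨i, ⟨j, hj⟩⟩))
        (Quotient.mk _ (Sum.inl (cycNext k ℓ hℓ ⟨i, ⟨j, hj⟩⟩))) :=
    fun j hj => Relation.EqvGen.rel _ _ ⟨Sum.inl ⟨i, ⟨j, hj⟩⟩, rfl, rfl, rfl⟩
  suffices h : ∀ d j (hj : j < ℓ i), j + d + 1 = ℓ i →
      Relation.EqvGen ((twoCycleDigr k ℓ hk hℓ).ColorAdj (twoCycleColor k ℓ χ) (χ i))
        (Quotient.mk _ (Sum.inl ⟨i, ⟨j, hj⟩⟩))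
        (uVert k ℓ hk hℓ ⟨(i + 1) % k, Nat.mod_lt _ hk⟩) from
    h (ℓ i - 1) 0 (hℓ i) (by have := hℓ i; omega)
  intro d
  induction d with
  | zero =>
    intro j hj hd
    have hnext := hedge j hj
    rw [cycNext, dif_neg (show ¬ j + 1 < ℓ i by omega)] at hnext
    exact hnext
  | succ d ih =>
    intro j hj hd
    have hnext := hedge j hj
    rw [cycNext, dif_pos (show j + 1 < ℓ i by omega)] at hnext
    exact Relation.EqvGen.trans _ _ _ hnext (ih (j + 1) _ (by omega))

theorem statement14_general {C S : Type}
    (rel : S → C → Prop) (hne : ∀ c : C, ∃ s : S, rel s c)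
    (Edg : C → C → Prop)
    (hstr : ∀ c c' : C, (∀ s : S, ¬ (rel s c ∧ rel s c')) ↔ Edg c c')
    (k : ℕ) (hk : 0 < k) (χ : Fin k → C) (hred : GReduced Edg χ)
    (ℓ : Fin k → ℕ) (hℓ : ∀ i, 0 < ℓ i)
    (π : S → Setoid (Quotient (glueSetoid k ℓ hk hℓ))) :
    ¬ ((∀ s : S,
          rhoSetoid (twoCycleDigr k ℓ hk hℓ) (twoCycleColor k ℓ χ) rel s ≤ π s)
      ∧ (∀ s : S,
          (GCC (twoCycleDigr k ℓ hk hℓ) (twoCycleColor k ℓ χ) rel π s).IsTree)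
      ∧ (∀ i : Fin k,
          ¬ (⨅ s : S, π s) (uVert k ℓ hk hℓ i)
              (uVert k ℓ hk hℓ ⟨((i : ℕ) + 1) % k, Nat.mod_lt _ hk⟩)
          ∧ ¬ (⨅ s : S, π s) (uVert' k ℓ hk hℓ i)
              (uVert' k ℓ hk hℓ ⟨((i : ℕ) + 1) % k, Nat.mod_lt _ hk⟩))) := by
  rintro ⟨hρ, htree, hJ⟩
  obtain ⟨i, hi⟩ := exists_iInf_of_reduced_cycle (twoCycleDigr k ℓ hk hℓ)
    (twoCycleColor k ℓ χ) rel π hne (fun c c' => (hstr c c').1) hk hred hρ htree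
    (uVert k ℓ hk hℓ) (eqvGen_colorAdj_uVert k ℓ hk hℓ χ)
  exact (hJ i).1 hi

/-- **Lemma (inconsistency): for the glued two-cycle test graph of a `𝒢`-reduced word,
the conditions `π_s ≥ ρ_s` for all `s`, `GCC(T,π,s)` a tree for all `s`, and
`J_π = ∅` cannot all hold.** -/
theorem statement14 {C S : Type} [Fintype C] [Fintype S]
    (rel : S → C → Prop) (hne : ∀ c : C, ∃ s : S, rel s c)
    (Edg : C → C → Prop) (hsymm : Symmetric Edg) (hirr : ∀ c : C, ¬ Edg c c)
    (hstr : ∀ c c' : C, (∀ s : S, ¬ (rel s c ∧ rel s c')) ↔ Edg c c')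
    (k : ℕ) (hk : 0 < k) (χ : Fin k → C) (hred : GReduced Edg χ)
    (ℓ : Fin k → ℕ) (hℓ : ∀ i, 0 < ℓ i)
    (π : S → Setoid (Quotient (glueSetoid k ℓ hk hℓ))) :
    ¬ ((∀ s : S,
          rhoSetoid (twoCycleDigr k ℓ hk hℓ) (twoCycleColor k ℓ χ) rel s ≤ π s)
      ∧ (∀ s : S,
          (GCC (twoCycleDigr k ℓ hk hℓ) (twoCycleColor k ℓ χ) rel π s).IsTree)
      ∧ (∀ i : Fin k,
          ¬ (⨅ s : S, π s) (uVert k ℓ hk hℓ i)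
              (uVert k ℓ hk hℓ ⟨((i : ℕ) + 1) % k, Nat.mod_lt _ hk⟩)
          ∧ ¬ (⨅ s : S, π s) (uVert' k ℓ hk hℓ i)
              (uVert' k ℓ hk hℓ ⟨((i : ℕ) + 1) % k, Nat.mod_lt _ hk⟩))) :=
  statement14_general rel hne Edg hstr k hk χ hred ℓ hℓ π

end GraphPaper
end

section
/- Let m ∈ ℕ, N_1, …, N_m ∈ ℕ, and L_1, …, L_m > 0. Let f : S_{N_1} × ⋯ × S_{N_m} → ℝ be such that for each j ∈ [m], f is L_j-Lipschitz in its j-th argument with respect to the normalized Hamming metric d(σ,π) = (1/N_j)#{i : σ(i) ≠ π(i)} when the other arguments are held fixed. Let Σ_1, …, Σ_m be independent, with Σ_j uniformly distributed on S_{N_j}. Then for every ε > 0, P(|f(Σ_1, …, Σ_m) − 𝔼 f(Σ_1, …, Σ_m)| ≥ ε) ≤ 2 Σ_{j=1}^m exp(−N_j ε² / (64 m² L_j²)). -/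
open Filter MeasureTheory Matrix
open scoped BigOperators Classical

namespace GraphPaper

/-!
Under the uniform distribution, `f - 𝔼 f` is sub-Gaussian with variance proxy
`∑ j, (9 / 4) * L j ^ 2 / Nv j`. This is the Doob-martingale argument: reveal the permutations one
coordinate at a time and, inside `S_{n+1} ≃ [n+1] × S_n`, first `σ 0` and then the induced
permutation of the other points. Each revealed step moves the conditional mean by at most
`3 L j / Nv j`, so Hoeffding's lemma bounds its exponential moment and the variance proxies add up.
Chernoff's bound then gives `2 exp (-2 ε² / (9 ∑ j, L j ^ 2 / Nv j))`, and
`∑ j, L j ^ 2 / Nv j ≤ m · max_j L j ^ 2 / Nv j` turns this into the stated bound.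
-/

section Subgaussian

open Finset Real

variable {Ω Ω' : Type*} [Fintype Ω] [Fintype Ω']

/-- `g - 𝔼 g` has a sub-Gaussian mgf with parameter `v` under the uniform distribution on `Ω`
(cf. `ProbabilityTheory.HasSubgaussianMGF`). -/
def IsSubgaussianUnif (g : Ω → ℝ) (v : ℝ) : Prop :=
  ∀ t : ℝ, 𝔼 x, exp (t * (g x - 𝔼 y, g y)) ≤ exp (v * t ^ 2 / 2)

lemma expect_eq_integral_uniformOfFintype [MeasurableSpace Ω] [MeasurableSingletonClass Ω]
    [Nonempty Ω] (g : Ω → ℝ) :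
    𝔼 x, g x = ∫ x, g x ∂(PMF.uniformOfFintype Ω).toMeasure := by
  simp [PMF.integral_eq_sum, PMF.uniformOfFintype_apply, Fintype.expect_eq_sum_div_card,
    div_eq_inv_mul, Finset.mul_sum]

/-- Hoeffding's lemma. -/
lemma isSubgaussianUnif_of_abs_sub_le {g : Ω → ℝ} {d : ℝ} (hg : ∀ x y, |g x - g y| ≤ d) :
    IsSubgaussianUnif g ((d / 2) ^ 2) := by
  intro t
  cases isEmpty_or_nonempty Ω
  · simp only [Finset.univ_eq_empty, Finset.expect_empty]; positivity
  let : MeasurableSpace Ω := ⊤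
  obtain ⟨x₀, hx₀⟩ := Finite.exists_min g
  have hd : 0 ≤ d := (abs_nonneg _).trans (hg x₀ x₀)
  have hmem : ∀ᵐ x ∂(PMF.uniformOfFintype Ω).toMeasure, g x ∈ Set.Icc (g x₀) (g x₀ + d) :=
    ae_of_all _ fun x => ⟨hx₀ x, by linarith [(abs_le.mp (hg x x₀)).2]⟩
  have := (ProbabilityTheory.hasSubgaussianMGF_of_mem_Icc (by fun_prop) hmem).mgf_le t
  rw [ProbabilityTheory.mgf, ← expect_eq_integral_uniformOfFintype,
    ← expect_eq_integral_uniformOfFintype] at this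
  convert this using 3
  simp [abs_of_nonneg hd]

lemma IsSubgaussianUnif.neg {g : Ω → ℝ} {v : ℝ} (hg : IsSubgaussianUnif g v) :
    IsSubgaussianUnif (fun x => -g x) v := fun t => by
  convert hg (-t) using 3 with x
  · rw [Finset.expect_neg_distrib]; ring
  · ring

lemma IsSubgaussianUnif.of_comp_equiv {g : Ω → ℝ} {v : ℝ} (e : Ω' ≃ Ω)
    (hg : IsSubgaussianUnif (g ∘ e) v) : IsSubgaussianUnif g v := fun t => by
  have hmean : 𝔼 y, g (e y) = 𝔼 y, g y := Fintype.expect_equiv e _ _ fun _ => rfl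
  calc 𝔼 x, exp (t * (g x - 𝔼 y, g y))
      = 𝔼 x, exp (t * (g (e x) - 𝔼 y, g (e y))) :=
        (Fintype.expect_equiv e _ _ fun x => by rw [hmean]).symm
    _ ≤ exp (v * t ^ 2 / 2) := hg t

lemma abs_expect_sub_expect_le [Nonempty Ω] {F G : Ω → ℝ} {c : ℝ}
    (h : ∀ x, |F x - G x| ≤ c) : |𝔼 x, F x - 𝔼 x, G x| ≤ c := by
  rw [← Finset.expect_sub_distrib]
  exact (Finset.abs_expect_le _ _).trans (Finset.expect_le univ_nonempty fun x _ => h x)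

section Prod

variable {A B : Type*} [Fintype A] [Fintype B]

lemma expect_prod (F : A × B → ℝ) : 𝔼 p, F p = 𝔼 a, 𝔼 b, F (a, b) := by
  rw [← Finset.univ_product_univ, Finset.expect_product]

lemma IsSubgaussianUnif.prod {F : A × B → ℝ} {v₁ v₂ : ℝ}
    (h₁ : IsSubgaussianUnif (fun a => 𝔼 b, F (a, b)) v₁)
    (h₂ : ∀ a, IsSubgaussianUnif (fun b => F (a, b)) v₂) :
    IsSubgaussianUnif F (v₁ + v₂) := by
  intro t
  set H : A → ℝ := fun a => 𝔼 b, F (a, b)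
  calc 𝔼 p, exp (t * (F p - 𝔼 q, F q))
      = 𝔼 a, exp (t * (H a - 𝔼 a', H a')) * 𝔼 b, exp (t * (F (a, b) - H a)) := by
        simp_rw [expect_prod F, expect_prod (fun p => exp (t * (F p - _))), Finset.mul_expect,
          ← exp_add]
        refine Finset.expect_congr rfl fun a _ => Finset.expect_congr rfl fun b _ => ?_
        simp only [H]
        ring_nf
    _ ≤ 𝔼 a, exp (t * (H a - 𝔼 a', H a')) * exp (v₂ * t ^ 2 / 2) :=
        Finset.expect_le_expect fun a _ => by gcongr; exact h₂ a t
    _ ≤ exp (v₁ * t ^ 2 / 2) * exp (v₂ * t ^ 2 / 2) := by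
        rw [← Finset.expect_mul]; gcongr; exact h₁ t
    _ = exp ((v₁ + v₂) * t ^ 2 / 2) := by rw [← exp_add]; ring_nf

end Prod

lemma IsSubgaussianUnif.card_ge_le {g : Ω → ℝ} {v s : ℝ} (hg : IsSubgaussianUnif g v)
    (hs : 0 ≤ s) :
    (#{x | s ≤ g x - 𝔼 y, g y} : ℝ) ≤ exp (-(s ^ 2 / (2 * v))) * Fintype.card Ω := by
  have hcard : (#{x | s ≤ g x - 𝔼 y, g y} : ℝ) ≤ Fintype.card Ω := by
    exact_mod_cast Finset.card_filter_le _ _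
  rcases le_or_gt v 0 with hv | hv
  · refine hcard.trans (le_mul_of_one_le_left (by positivity) (one_le_exp ?_))
    rw [neg_nonneg]
    exact div_nonpos_of_nonneg_of_nonpos (sq_nonneg s) (by linarith)
  set t := s / v
  have hmarkov : (#{x | s ≤ g x - 𝔼 y, g y} : ℝ) * exp (t * s) ≤
      Fintype.card Ω * exp (v * t ^ 2 / 2) := by
    calc (#{x | s ≤ g x - 𝔼 y, g y} : ℝ) * exp (t * s)
        = ∑ x with s ≤ g x - 𝔼 y, g y, exp (t * s) := by rw [Finset.sum_const, nsmul_eq_mul]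
      _ ≤ ∑ x with s ≤ g x - 𝔼 y, g y, exp (t * (g x - 𝔼 y, g y)) :=
          Finset.sum_le_sum fun x hx => by gcongr; exact (Finset.mem_filter.mp hx).2
      _ ≤ ∑ x, exp (t * (g x - 𝔼 y, g y)) :=
          Finset.sum_le_sum_of_subset_of_nonneg (Finset.filter_subset _ _) fun _ _ _ => by
            positivity
      _ = Fintype.card Ω * 𝔼 x, exp (t * (g x - 𝔼 y, g y)) := by
          rw [Fintype.card_mul_expect]
      _ ≤ Fintype.card Ω * exp (v * t ^ 2 / 2) := by gcongr; exact hg t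
  have hexp : v * t ^ 2 / 2 - t * s = -(s ^ 2 / (2 * v)) := by
    simp only [t]; field_simp; ring
  rw [← hexp, exp_sub, div_mul_eq_mul_div, le_div_iff₀ (exp_pos _)]
  linarith

lemma IsSubgaussianUnif.card_abs_ge_le {g : Ω → ℝ} {v s : ℝ} (hg : IsSubgaussianUnif g v)
    (hs : 0 ≤ s) :
    (#{x | s ≤ |g x - 𝔼 y, g y|} : ℝ) ≤ 2 * exp (-(s ^ 2 / (2 * v))) * Fintype.card Ω := by
  have hsplit : ({x | s ≤ |g x - 𝔼 y, g y|} : Finset Ω) ⊆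
      ({x | s ≤ g x - 𝔼 y, g y} : Finset Ω) ∪ ({x | s ≤ -g x - 𝔼 y, -g y} : Finset Ω) := by
    intro x hx
    simp only [Finset.mem_filter, Finset.mem_union, Finset.mem_univ, true_and,
      Finset.expect_neg_distrib] at hx ⊢
    rcases le_abs'.mp hx with h | h
    · right; linarith
    · left; exact h
  have hcard : (#{x | s ≤ |g x - 𝔼 y, g y|} : ℝ) ≤
      #{x | s ≤ g x - 𝔼 y, g y} + #{x | s ≤ -g x - 𝔼 y, -g y} := by
    exact_mod_cast (Finset.card_le_card hsplit).trans (Finset.card_union_le _ _)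
  linarith [hg.card_ge_le hs, hg.neg.card_ge_le hs]

end Subgaussian

section Perm

open Equiv Equiv.Perm

lemma hammingDist_mul_right {ι : Type*} [Fintype ι] [DecidableEq ι] (σ τ ρ : Perm ι) :
    hammingDist ⇑(σ * ρ) ⇑(τ * ρ) = hammingDist ⇑σ ⇑τ :=
  Finset.card_equiv ρ fun i => by simp only [Finset.mem_filter, Finset.mem_univ, true_and]; rfl

lemma hammingDist_swap_swap_le {ι : Type*} [Fintype ι] [DecidableEq ι] (x a b : ι) :
    hammingDist ⇑(swap x a) ⇑(swap x b) ≤ 3 := by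
  refine (Finset.card_le_card (t := {x, a, b}) fun j hj => ?_).trans Finset.card_le_three
  contrapose! hj
  simp only [Finset.mem_insert, Finset.mem_singleton, not_or] at hj
  simp [swap_apply_of_ne_of_ne, hj]

lemma decomposeFin_symm_eq_swap_mul {n : ℕ} (p : Fin (n + 1)) (τ : Perm (Fin n)) :
    decomposeFin.symm (p, τ) = swap 0 p * decomposeFin.symm (0, τ) := by
  ext i
  refine Fin.cases ?_ (fun i => ?_) i <;>
    simp [decomposeFin_symm_apply_zero, decomposeFin_symm_apply_succ]

lemma hammingDist_decomposeFin_symm_left {n : ℕ} (p : Fin (n + 1)) (τ₁ τ₂ : Perm (Fin n)) :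
    hammingDist ⇑(decomposeFin.symm (p, τ₁)) ⇑(decomposeFin.symm (p, τ₂)) =
      hammingDist ⇑τ₁ ⇑τ₂ := by
  simp [hammingDist, Finset.card_filter, Fin.sum_univ_succ, decomposeFin_symm_apply_zero,
    decomposeFin_symm_apply_succ]

lemma hammingDist_decomposeFin_symm_right_le {n : ℕ} (p q : Fin (n + 1)) (τ : Perm (Fin n)) :
    hammingDist ⇑(decomposeFin.symm (p, τ)) ⇑(decomposeFin.symm (q, τ)) ≤ 3 := by
  rw [decomposeFin_symm_eq_swap_mul p, decomposeFin_symm_eq_swap_mul q, hammingDist_mul_right]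
  exact hammingDist_swap_swap_le 0 p q

theorem isSubgaussianUnif_of_lipschitz_perm {ℓ : ℝ} (hℓ : 0 ≤ ℓ) :
    ∀ {n : ℕ} {h : Perm (Fin n) → ℝ}, (∀ σ τ, |h σ - h τ| ≤ ℓ * hammingDist ⇑σ ⇑τ) →
      IsSubgaussianUnif h (n * (3 * ℓ / 2) ^ 2)
  | 0, h, _ => by
    simpa using isSubgaussianUnif_of_abs_sub_le (g := h) (d := 0) fun σ τ => by
      rw [Subsingleton.elim σ τ, sub_self, abs_zero]
  | n + 1, h, hh => by
    let e := (decomposeFin (n := n)).symm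
    have hcross : ∀ p q τ, |h (e (p, τ)) - h (e (q, τ))| ≤ 3 * ℓ := fun p q τ => by
      refine (hh _ _).trans ?_
      rw [mul_comm]
      gcongr
      exact_mod_cast hammingDist_decomposeFin_symm_right_le p q τ
    have hfiber : ∀ p τ₁ τ₂, |h (e (p, τ₁)) - h (e (p, τ₂))| ≤ ℓ * hammingDist ⇑τ₁ ⇑τ₂ :=
      fun p τ₁ τ₂ => (hh _ _).trans_eq (by rw [hammingDist_decomposeFin_symm_left])
    refine IsSubgaussianUnif.of_comp_equiv e ?_
    convert IsSubgaussianUnif.prod (F := h ∘ e)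
      (isSubgaussianUnif_of_abs_sub_le fun p q => abs_expect_sub_expect_le (hcross p q))
      (fun p => isSubgaussianUnif_of_lipschitz_perm hℓ (hfiber p)) using 1
    push_cast
    ring

theorem isSubgaussianUnif_of_lipschitz_pi_perm :
    ∀ {m : ℕ} {N : Fin m → ℕ} {ℓ : Fin m → ℝ}, (∀ j, 0 ≤ ℓ j) →
      ∀ {f : ((j : Fin m) → Perm (Fin (N j))) → ℝ},
      (∀ j x (σ τ : Perm (Fin (N j))),
        |f (Function.update x j σ) - f (Function.update x j τ)| ≤ ℓ j * hammingDist ⇑σ ⇑τ) →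
      IsSubgaussianUnif f (∑ j, N j * (3 * ℓ j / 2) ^ 2)
  | 0, N, ℓ, _, f, _ => by
    simpa using isSubgaussianUnif_of_abs_sub_le (g := f) (d := 0) fun x y => by
      rw [Subsingleton.elim x y, sub_self, abs_zero]
  | m + 1, N, ℓ, hℓ, f, hf => by
    have hhead : ∀ y σ τ, |f (Fin.cons σ y) - f (Fin.cons τ y)| ≤ ℓ 0 * hammingDist ⇑σ ⇑τ :=
      fun y σ τ => by simpa only [Fin.update_cons_zero] using hf 0 (Fin.cons σ y) σ τ
    have htail : ∀ σ j y (τ₁ τ₂ : Perm (Fin (N j.succ))),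
        |f (Fin.cons σ (Function.update y j τ₁)) - f (Fin.cons σ (Function.update y j τ₂))| ≤
          ℓ j.succ * hammingDist ⇑τ₁ ⇑τ₂ :=
      fun σ j y τ₁ τ₂ => by simpa only [Fin.cons_update] using hf j.succ (Fin.cons σ y) τ₁ τ₂
    refine IsSubgaussianUnif.of_comp_equiv (Fin.consEquiv fun j => Perm (Fin (N j))) ?_
    convert IsSubgaussianUnif.prod (F := f ∘ Fin.consEquiv fun j => Perm (Fin (N j)))
      (isSubgaussianUnif_of_lipschitz_perm (hℓ 0) fun σ τ =>
        abs_expect_sub_expect_le fun y => hhead y σ τ)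
      (fun σ => isSubgaussianUnif_of_lipschitz_pi_perm (fun j => hℓ j.succ) (htail σ)) using 1
    rw [Fin.sum_univ_succ]

end Perm

lemma exp_neg_div_sum_le_sum_exp {ι : Type*} [Fintype ι] [Nonempty ι] {w : ι → ℝ}
    (hw : ∀ i, 0 ≤ w i) {a : ℝ} (ha : 0 ≤ a) :
    Real.exp (-(a / ∑ i, w i)) ≤ ∑ i, Real.exp (-(a / (Fintype.card ι * w i))) := by
  obtain ⟨i₀, hi₀⟩ := Finite.exists_max w
  have hsum : ∑ i, w i ≤ Fintype.card ι * w i₀ := by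
    simpa using Finset.sum_le_card_nsmul Finset.univ w (w i₀) fun i _ => hi₀ i
  refine le_trans ?_ (Finset.single_le_sum (fun i _ => (Real.exp_pos _).le) (Finset.mem_univ i₀))
  rw [Real.exp_le_exp, neg_le_neg_iff]
  rcases (hw i₀).eq_or_lt with h | h
  · rw [← h, mul_zero, div_zero]
    exact div_nonneg ha (Finset.sum_nonneg fun i _ => hw i)
  · exact div_le_div_of_nonneg_left ha
      (h.trans_le (Finset.single_le_sum (fun i _ => hw i) (Finset.mem_univ i₀))) hsum

/-- **Lemma (iterated concentration for several independent uniform permutations).** -/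
theorem statement16 (m : ℕ) (Nv : Fin m → ℕ) (L : Fin m → ℝ) (hL : ∀ j, 0 < L j)
    (f : ((j : Fin m) → Equiv.Perm (Fin (Nv j))) → ℝ)
    (hf : ∀ (j : Fin m) (x : (j : Fin m) → Equiv.Perm (Fin (Nv j)))
        (σ τ : Equiv.Perm (Fin (Nv j))),
        |f (Function.update x j σ) - f (Function.update x j τ)| ≤ L j * dHamm σ τ)
    (ε : ℝ) (hε : 0 < ε) :
    ((Finset.univ.filter fun x : (j : Fin m) → Equiv.Perm (Fin (Nv j)) =>
        ε ≤ |f x - (∑ y : (j : Fin m) → Equiv.Perm (Fin (Nv j)), f y) /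
          (Fintype.card ((j : Fin m) → Equiv.Perm (Fin (Nv j))) : ℝ)|).card : ℝ) /
      (Fintype.card ((j : Fin m) → Equiv.Perm (Fin (Nv j))) : ℝ)
      ≤ 2 * ∑ j : Fin m,
          Real.exp (-(Nv j : ℝ) * ε ^ 2 / (64 * (m : ℝ) ^ 2 * L j ^ 2)) := by
  have hcard : (0 : ℝ) < Fintype.card ((j : Fin m) → Equiv.Perm (Fin (Nv j))) := by
    exact_mod_cast Fintype.card_pos
  rw [← Fintype.expect_eq_sum_div_card, div_le_iff₀ hcard]
  rcases Nat.eq_zero_or_pos m with rfl | hm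
  · simpa using hε
  have hsub := isSubgaussianUnif_of_lipschitz_pi_perm
    (fun j => div_nonneg (hL j).le (Nat.cast_nonneg (Nv j))) (f := f)
    fun j x σ τ => (hf j x σ τ).trans_eq (by rw [dHamm, hammingDist]; ring)
  refine (hsub.card_abs_ge_le hε.le).trans ?_
  gcongr 2 * ?_ * _
  have : Nonempty (Fin m) := ⟨⟨0, hm⟩⟩
  rw [← div_div]
  refine (exp_neg_div_sum_le_sum_exp (fun j => by positivity) (by positivity)).trans
    (Finset.sum_le_sum fun j _ => ?_)
  rw [Real.exp_le_exp, Fintype.card_fin]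
  rcases (Nat.cast_nonneg (α := ℝ) (Nv j)).eq_or_lt with hN | hN
  · simp [← hN]
  · have := hL j
    have : (1 : ℝ) ≤ m := by exact_mod_cast hm
    field_simp
    linarith

end GraphPaper
end
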